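/- Let $n \geq 4$ and let $a_2 \leq a_3 \leq \cdots \leq a_n$ be positive reals. Then there exists $\delta_0 > 0$ such that for all $0 < \delta < \delta_0$, defining $l_2 = a_2 - 2\delta$ and $l_k = a_k - l_{k-1}$ for $3 \leq k \leq n-2$, one has $l_k > 0$ for all $2 \leq k \leq n-2$ and $l_{n-2} < a_{n-1}$. -/

import Mathlib

/-! Since `a_k ≤ a_{k+1}`, the reflection `x ↦ a_{k+1} - x` maps `[c, a_k - c]` into
`[c, a_{k+1} - c]`. With `c = min (a₂ - 2δ) (2δ)` the interval contains `l₂`, so every `l_k`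
is at least `c > 0`, and `l_{n-2} ≤ a_{n-2} - c < a_{n-1}`. -/

theorem mem_Icc_sub_of_mem_Icc_sub {c x a a' : ℝ} (hx : x ∈ Set.Icc c (a - c)) (ha : a ≤ a') :
    a' - x ∈ Set.Icc c (a' - c) :=
  ⟨by linarith [hx.2], by linarith [hx.1]⟩

theorem mem_Icc_of_alternating_rec {a l : ℕ → ℝ} {c : ℝ} {m N : ℕ}
    (hm : l m ∈ Set.Icc c (a m - c))
    (hrec : ∀ k, m ≤ k → k < N → l (k + 1) = a (k + 1) - l k)
    (hmono : ∀ k, m ≤ k → k < N → a k ≤ a (k + 1)) :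
    ∀ k, m ≤ k → k ≤ N → l k ∈ Set.Icc c (a k - c) := by
  intro k hk
  induction k, hk using Nat.le_induction with
  | base => exact fun _ => hm
  | succ k hk ih =>
    intro hkN
    rw [hrec k hk hkN]
    exact mem_Icc_sub_of_mem_Icc_sub (ih (Nat.le_of_succ_le hkN)) (hmono k hk hkN)

/-- Perturbed nested-circle construction in the case `a₁ = a₂`: for all
sufficiently small `δ > 0`, the lengths `l₂ = a₂ - 2δ`, `l_k = a_k - l_{k-1}`
are positive and `l_{n-2} < a_{n-1}`. -/
theorem stmt_6 (n : ℕ) (hn : 4 ≤ n) (a : ℕ → ℝ)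
    (ha2 : 0 < a 2)
    (hmono : ∀ j, 2 ≤ j → j + 1 ≤ n → a j ≤ a (j + 1)) :
    ∃ δ0 > 0, ∀ δ : ℝ, 0 < δ → δ < δ0 →
      ∀ l : ℕ → ℝ, l 2 = a 2 - 2 * δ →
        (∀ k, 3 ≤ k → k ≤ n - 2 → l k = a k - l (k - 1)) →
        (∀ k, 2 ≤ k → k ≤ n - 2 → 0 < l k) ∧ l (n - 2) < a (n - 1) := by
  refine ⟨a 2 / 2, by linarith, fun δ hδ hδ0 l hl2 hrec => ?_⟩
  set c := min (a 2 - 2 * δ) (2 * δ)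
  have hc : 0 < c := lt_min (by linarith) (by linarith)
  have hl2_mem : l 2 ∈ Set.Icc c (a 2 - c) :=
    ⟨hl2 ▸ min_le_left _ _, by rw [hl2]; linarith [min_le_right (a 2 - 2 * δ) (2 * δ)]⟩
  have hbound := mem_Icc_of_alternating_rec (N := n - 2) hl2_mem
    (fun k hk hkN => by simpa using hrec (k + 1) (by omega) hkN)
    (fun k hk hkN => hmono k hk (by omega))
  refine ⟨fun k hk hkn => hc.trans_le (hbound k hk hkn).1, ?_⟩
  have hlast : a (n - 2) ≤ a (n - 1) := by
    simpa [show n - 2 + 1 = n - 1 by omega] using hmono (n - 2) (by omega) (by omega)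
  linarith [(hbound (n - 2) (by omega) le_rfl).2]
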